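/- For positive definite matrices A, B, there exists a unitary matrix U such that A ♮ B = U (A^{1/2} B A^{1/2})^{1/2} U*. In particular, the eigenvalues of A ♮ B are the positive square roots of the eigenvalues of AB. -/

import Mathlib

open Matrix
open scoped ComplexOrder

noncomputable def mpow {m : Type*} [Fintype m] [DecidableEq m]
    (A : Matrix m m ℂ) (t : ℝ) : Matrix m m ℂ :=
  if h : A.IsHermitian then
    (h.eigenvectorUnitary : Matrix m m ℂ) *
      Matrix.diagonal (fun i => ((h.eigenvalues i ^ t : ℝ) : ℂ)) *
      star (h.eigenvectorUnitary : Matrix m m ℂ)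
  else A

/-- t-metric geometric mean `A ♯ₜ B`. -/
noncomputable def msharp {m : Type*} [Fintype m] [DecidableEq m]
    (A B : Matrix m m ℂ) (t : ℝ) : Matrix m m ℂ :=
  mpow A (1/2) * mpow (mpow A (-(1/2)) * B * mpow A (-(1/2))) t * mpow A (1/2)

/-- t-spectral geometric mean `A ♮ₜ B`. -/
noncomputable def mnat {m : Type*} [Fintype m] [DecidableEq m]
    (A B : Matrix m m ℂ) (t : ℝ) : Matrix m m ℂ :=
  mpow (msharp A⁻¹ B (1/2)) t * A * mpow (msharp A⁻¹ B (1/2)) t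

/-- Eigenvalues in non-increasing order (junk value `0` if not Hermitian). -/
noncomputable def eigsDesc {n : ℕ} (A : Matrix (Fin n) (Fin n) ℂ) : Fin n → ℝ :=
  if h : A.IsHermitian then (fun i => h.eigenvalues (Tuple.sort h.eigenvalues i.rev)) else 0

/-- `x` is log-majorized by `y` (both listed in non-increasing order). -/
def LogMaj {n : ℕ} (x y : Fin n → ℝ) : Prop :=
  (∀ k : ℕ, ∏ i ∈ Finset.univ.filter (fun i : Fin n => (i : ℕ) < k), x i ≤
      ∏ i ∈ Finset.univ.filter (fun i : Fin n => (i : ℕ) < k), y i) ∧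
    ∏ i, x i = ∏ i, y i

/-- k-th compound matrix. -/
noncomputable def compound {n : ℕ} (k : ℕ) (A : Matrix (Fin n) (Fin n) ℂ) :
    Matrix {s : Finset (Fin n) // s.card = k} {s : Finset (Fin n) // s.card = k} ℂ :=
  fun s t => (A.submatrix (fun i => (s.1.orderIsoOfFin s.2 i : Fin n))
    (fun i => (t.1.orderIsoOfFin t.2 i : Fin n))).det

/-! With `R = A^{1/2}` and `T = (R B R)^{1/2}` one has `A⁻¹ ♯ B = R⁻¹ T R⁻¹`. Hence for
`Q = (A⁻¹ ♯ B)^{1/2}` and `X = R Q`, the spectral mean `A ♮ B = Q A Q` equals `X* X`, while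
`X X* = R (A⁻¹ ♯ B) R = T`. For invertible `X` the matrices `X* X` and `X X*` are unitarily
similar through the unitary polar factor `X* (X X*)^{-1/2}`. Squaring, `(A ♮ B)²` is unitarily
similar to `T² = R B R = R⁻¹ (A B) R`, which has the spectrum of `A B`. -/

lemma spectrum_mul_mul_self {R A : Type*} [CommSemiring R] [Ring A] [Algebra R A]
    (r : Aˣ) (b : A) : spectrum R (r * b * r) = spectrum R (r * r * b) := by
  rw [← spectrum.units_conjugate' (u := r) (a := r * r * b)]
  simp only [mul_assoc, Units.inv_mul_cancel_left]

section

variable {m : Type*} [Fintype m] [DecidableEq m] {A B : Matrix m m ℂ}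

lemma mpow_eq_cfc (hA : A.IsHermitian) (t : ℝ) : mpow A t = cfc (fun x : ℝ => x ^ t) A := by
  rw [mpow, dif_pos hA, hA.cfc_eq, IsHermitian.cfc, Unitary.conjStarAlgAut_apply]
  rfl

lemma Matrix.PosDef.mpow (hA : A.PosDef) (t : ℝ) : (mpow A t).PosDef := by
  rw [_root_.mpow, dif_pos hA.1,
    (Unitary.isUnit_coe (U := hA.1.eigenvectorUnitary)).posDef_star_right_conjugate_iff]
  exact .diagonal fun i => by exact_mod_cast Real.rpow_pos_of_pos (hA.eigenvalues_pos i) t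

lemma mpow_mul_mpow (hA : A.PosDef) (s t : ℝ) : mpow A s * mpow A t = mpow A (s + t) := by
  rw [mpow_eq_cfc hA.1, mpow_eq_cfc hA.1, mpow_eq_cfc hA.1, ← cfc_mul _ _ A
    (A.finite_real_spectrum.continuousOn _) (A.finite_real_spectrum.continuousOn _)]
  refine cfc_congr fun x hx => (Real.rpow_add ?_ s t).symm
  obtain ⟨i, rfl⟩ := hA.1.spectrum_real_eq_range_eigenvalues ▸ hx
  exact hA.eigenvalues_pos i

lemma mpow_one (hA : A.IsHermitian) : mpow A 1 = A := by
  simp only [mpow_eq_cfc hA, Real.rpow_one, cfc_id' ℝ A]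

lemma mpow_zero (hA : A.IsHermitian) : mpow A 0 = 1 := by
  simp only [mpow_eq_cfc hA, Real.rpow_zero, cfc_const_one ℝ A]

lemma mpow_half_mul_self (hA : A.PosDef) : mpow A (1/2) * mpow A (1/2) = A := by
  rw [mpow_mul_mpow hA, add_halves, mpow_one hA.1]

lemma mpow_neg (hA : A.PosDef) (t : ℝ) : mpow A (-t) = (mpow A t)⁻¹ :=
  (inv_eq_left_inv (by rw [mpow_mul_mpow hA, neg_add_cancel, mpow_zero hA.1])).symm

open scoped MatrixOrder in
lemma mpow_half_eq_of_mul_self {P : Matrix m m ℂ} (hA : A.PosDef) (hP : P.PosDef)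
    (h : P * P = A) : mpow A (1/2) = P :=
  (CFC.mul_self_eq_mul_self_iff _ _ (hA.mpow _).posSemidef.nonneg hP.posSemidef.nonneg).mp
    (by rw [mpow_half_mul_self hA, h])

lemma mpow_inv_half (hA : A.PosDef) : mpow A⁻¹ (1/2) = (mpow A (1/2))⁻¹ :=
  mpow_half_eq_of_mul_self hA.inv (hA.mpow _).inv
    (by rw [← Matrix.mul_inv_rev, mpow_half_mul_self hA])

lemma msharp_inv_left (hA : A.PosDef) (B : Matrix m m ℂ) (t : ℝ) :
    msharp A⁻¹ B t = (mpow A (1/2))⁻¹ * mpow (mpow A (1/2) * B * mpow A (1/2)) t *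
      (mpow A (1/2))⁻¹ := by
  rw [msharp, mpow_neg hA.inv, mpow_inv_half hA, Matrix.nonsing_inv_nonsing_inv _
    (hA.mpow _).det_pos.ne'.isUnit]

lemma Matrix.PosDef.mul_mul_of_isHermitian {P : Matrix m m ℂ} (hB : B.PosDef)
    (hP : P.IsHermitian) (hPu : IsUnit P) : (P * B * P).PosDef := by
  simpa only [star_eq_conjTranspose, hP.eq] using hPu.posDef_star_right_conjugate_iff.mpr hB

lemma exists_unitary_conjTranspose_mul_self_eq {X : Matrix m m ℂ} (hX : IsUnit X) :
    ∃ U : unitaryGroup m ℂ, Xᴴ * X = U * (X * Xᴴ) * star (U : Matrix m m ℂ) := by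
  have hXX : (X * Xᴴ).PosDef := .mul_conjTranspose_self X (vecMul_injective_of_isUnit hX)
  set P := mpow (X * Xᴴ) (1/2)
  have hP : P.PosDef := hXX.mpow _
  have hPP : P * P = X * Xᴴ := mpow_half_mul_self hXX
  have hPu : IsUnit P.det := hP.det_pos.ne'.isUnit
  have hstar : star (Xᴴ * P⁻¹) = P⁻¹ * X := by
    rw [star_mul, star_eq_conjTranspose, star_eq_conjTranspose, conjTranspose_nonsing_inv,
      hP.1.eq, conjTranspose_conjTranspose]
  refine ⟨⟨Xᴴ * P⁻¹, mem_unitaryGroup_iff'.mpr ?_⟩, ?_⟩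
  · rw [hstar, mul_assoc, ← mul_assoc X, ← hPP, mul_assoc, mul_nonsing_inv _ hPu, mul_one,
      nonsing_inv_mul _ hPu]
  · show Xᴴ * X = Xᴴ * P⁻¹ * (X * Xᴴ) * star (Xᴴ * P⁻¹)
    rw [hstar, ← hPP]
    simp only [mul_assoc, nonsing_inv_mul_cancel_left _ _ hPu, mul_nonsing_inv_cancel_left _ _ hPu]

lemma exists_mnat_half_eq_conjTranspose_mul_self (hA : A.PosDef) (hB : B.PosDef) :
    ∃ X : Matrix m m ℂ, IsUnit X ∧ mnat A B (1/2) = Xᴴ * X ∧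
      X * Xᴴ = mpow (mpow A (1/2) * B * mpow A (1/2)) (1/2) := by
  set R := mpow A (1/2)
  set T := mpow (R * B * R) (1/2)
  have hR : R.PosDef := hA.mpow _
  have hRu : IsUnit R.det := hR.det_pos.ne'.isUnit
  have hRR : R * R = A := mpow_half_mul_self hA
  have hT : T.PosDef := (hB.mul_mul_of_isHermitian hR.1 hR.isUnit).mpow _
  have hS : (msharp A⁻¹ B (1/2)).PosDef := by
    rw [msharp_inv_left hA]
    exact hT.mul_mul_of_isHermitian hR.inv.1 hR.inv.isUnit
  set Q := mpow (msharp A⁻¹ B (1/2)) (1/2)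
  have hQ : Q.PosDef := hS.mpow _
  have hQQ : Q * Q = R⁻¹ * T * R⁻¹ := by rw [mpow_half_mul_self hS, msharp_inv_left hA]
  refine ⟨R * Q, hR.isUnit.mul hQ.isUnit, ?_, ?_⟩
  · change Q * A * Q = (R * Q)ᴴ * (R * Q)
    rw [conjTranspose_mul, hR.1.eq, hQ.1.eq, ← hRR]
    simp only [mul_assoc]
  · rw [conjTranspose_mul, hR.1.eq, hQ.1.eq, mul_assoc, ← mul_assoc Q, hQQ]
    simp only [mul_assoc, mul_nonsing_inv_cancel_left _ _ hRu, nonsing_inv_mul _ hRu, mul_one]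

end

theorem mnat_unitary_conj {n : ℕ} (A B : Matrix (Fin n) (Fin n) ℂ)
    (hA : A.PosDef) (hB : B.PosDef) :
    ∃ U : Matrix.unitaryGroup (Fin n) ℂ,
      mnat A B (1/2) =
        (U : Matrix (Fin n) (Fin n) ℂ) * mpow (mpow A (1/2) * B * mpow A (1/2)) (1/2) *
          star (U : Matrix (Fin n) (Fin n) ℂ) ∧
      spectrum ℂ (mnat A B (1/2) ^ 2) = spectrum ℂ (A * B) := by
  obtain ⟨X, hX, hmnat, hT⟩ := exists_mnat_half_eq_conjTranspose_mul_self hA hB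
  obtain ⟨U, hU⟩ := exists_unitary_conjTranspose_mul_self_eq hX
  have hconj : mnat A B (1/2) =
      Unitary.conjStarAlgAut ℂ _ U (mpow (mpow A (1/2) * B * mpow A (1/2)) (1/2)) := by
    rw [hmnat, hU, hT, Unitary.conjStarAlgAut_apply]
  refine ⟨U, hconj, ?_⟩
  have hRBR : (mpow A (1/2) * B * mpow A (1/2)).PosDef :=
    hB.mul_mul_of_isHermitian (hA.mpow _).1 (hA.mpow _).isUnit
  rw [hconj, ← map_pow, AlgEquiv.spectrum_eq, sq, mpow_half_mul_self hRBR,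
    ← (hA.mpow (1/2)).isUnit.unit_spec, spectrum_mul_mul_self, IsUnit.unit_spec,
    mpow_half_mul_self hA]
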